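/- arXiv:2412.08025 — 5 statements merged into one kernel-verified Lean document; each statement's English description precedes it below -/
import Mathlib

section
/- Let α ∈ (0, 1) and let (r_t) be a real sequence satisfying r_{t+1} = −(1 − α)·r_t − r_t² for all t. Suppose that r_t · r_{t+1} < 0 for every t ∈ ℕ. Then for every t with r_t < 0 one has |r_{t+2}| < (1 − α)² · |r_t|, and consequently lim_{t→∞} r_t = 0. -/
/-!
STATEMENT 3 (toy model, positive α): if r_{t+1} = −(1−α) r_t − r_t² with
α ∈ (0,1) and r_t r_{t+1} < 0 for all t, then for every t with r_t < 0 one has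
|r_{t+2}| < (1−α)² |r_t|, and r_t → 0.
-/

theorem toy_model_positive_alpha
    (α : ℝ) (hα0 : 0 < α) (hα1 : α < 1) (r : ℕ → ℝ)
    (hrec : ∀ t, r (t + 1) = -(1 - α) * r t - (r t) ^ 2)
    (hosc : ∀ t : ℕ, r t * r (t + 1) < 0) :
    (∀ t, r t < 0 → |r (t + 2)| < (1 - α) ^ 2 * |r t|) ∧
    Filter.Tendsto r Filter.atTop (nhds 0) := by
  set b : ℝ := 1 - α with hbdef
  have hb0 : 0 < b := by simp only [hbdef]; linarith
  have hb1 : b < 1 := by simp only [hbdef]; linarith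
  -- sign steps
  have hsignP : ∀ t, r t < 0 → 0 < r (t + 1) := by
    intro t ht
    by_contra h
    push_neg at h
    nlinarith [hosc t, mul_nonneg (neg_nonneg.mpr ht.le) (neg_nonneg.mpr h)]
  have hsignN : ∀ t, 0 < r t → r (t + 1) < 0 := by
    intro t ht
    by_contra h
    push_neg at h
    nlinarith [hosc t, mul_nonneg ht.le h]
  -- if r t < 0 then b + r t > 0
  have hA : ∀ t, r t < 0 → 0 < b + r t := by
    intro t ht
    by_contra h
    push_neg at h
    have h1 := hsignP t ht
    have h2 := hrec t
    nlinarith [mul_nonneg (neg_nonneg.mpr ht.le) (neg_nonneg.mpr h)]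
  -- one-step decay from negative values
  have hB : ∀ t, r t < 0 → |r (t + 1)| ≤ b * |r t| := by
    intro t ht
    rw [abs_of_pos (hsignP t ht), abs_of_neg ht, hrec t]
    nlinarith [sq_nonneg (r t)]
  -- two-step sign
  have hC : ∀ t, r t < 0 → r (t + 2) < 0 := by
    intro t ht
    exact hsignN (t + 1) (hsignP t ht)
  -- the main strict claim
  have claim : ∀ t, r t < 0 → |r (t + 2)| < b ^ 2 * |r t| := by
    intro t ht
    have h1 : 0 < r (t + 1) := hsignP t ht
    have h2 : r (t + 2) < 0 := hC t ht
    have hAt : 0 < b + r t := hA t ht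
    have hsub : 0 < b - (b + r t) ^ 2 := by nlinarith
    rw [abs_of_neg h2, abs_of_neg ht, show t + 2 = (t + 1) + 1 from rfl, hrec (t + 1), hrec t]
    nlinarith [mul_pos (mul_pos (neg_pos.mpr ht) (neg_pos.mpr ht)) hsub]
  constructor
  · intro t ht
    exact claim t ht
  -- geometric decay along two steps
  · have decay2 : ∀ m, r m < 0 → ∀ k, r (m + 2 * k) < 0 ∧ |r (m + 2 * k)| ≤ b ^ (2 * k) * |r m| := by
      intro m hm k
      induction k with
      | zero => simp [hm]
      | succ k ih =>
        obtain ⟨hneg, hle⟩ := ih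
        have heq : m + 2 * (k + 1) = (m + 2 * k) + 2 := by ring
        constructor
        · rw [heq]; exact hC _ hneg
        · rw [heq]
          have := (claim _ hneg).le
          have hb2 : (0:ℝ) ≤ b ^ 2 := sq_nonneg b
          calc |r (m + 2 * k + 2)| ≤ b ^ 2 * |r (m + 2 * k)| := this
            _ ≤ b ^ 2 * (b ^ (2 * k) * |r m|) := by
                exact mul_le_mul_of_nonneg_left hle hb2
            _ = b ^ (2 * (k + 1)) * |r m| := by ring
    have decayAll : ∀ m, r m < 0 → ∀ n, |r (m + n)| ≤ b ^ n * |r m| := by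
      intro m hm n
      rcases Nat.even_or_odd n with ⟨k, hk⟩ | ⟨k, hk⟩
      · have := (decay2 m hm k).2
        rw [hk]
        calc |r (m + (k + k))| = |r (m + 2 * k)| := by ring_nf
          _ ≤ b ^ (2 * k) * |r m| := this
          _ = b ^ (k + k) * |r m| := by ring_nf
      · obtain ⟨hneg, hle⟩ := decay2 m hm k
        have h1 : |r (m + 2 * k + 1)| ≤ b * |r (m + 2 * k)| := hB _ hneg
        rw [hk]
        calc |r (m + (2 * k + 1))| = |r (m + 2 * k + 1)| := by ring_nf
          _ ≤ b * |r (m + 2 * k)| := h1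
          _ ≤ b * (b ^ (2 * k) * |r m|) := by
              exact mul_le_mul_of_nonneg_left hle hb0.le
          _ = b ^ (2 * k + 1) * |r m| := by ring
    have hpow : Filter.Tendsto (fun n : ℕ => b ^ n) Filter.atTop (nhds 0) :=
      tendsto_pow_atTop_nhds_zero_of_lt_one hb0.le hb1
    have tendsto_from : ∀ m, r m < 0 → Filter.Tendsto (fun n => r (m + n)) Filter.atTop (nhds 0) := by
      intro m hm
      have hg : Filter.Tendsto (fun n : ℕ => b ^ n * |r m|) Filter.atTop (nhds 0) := by
        simpa using hpow.mul_const |r m|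
      apply squeeze_zero_norm _ hg
      intro n
      simpa [Real.norm_eq_abs] using decayAll m hm n
    have hr0 : r 0 ≠ 0 := by
      intro h
      have := hosc 0
      rw [h] at this
      simp at this
    rcases hr0.lt_or_gt with h0 | h0
    · have := tendsto_from 0 h0
      simpa using this
    · have h1 : r 1 < 0 := hsignN 0 h0
      have := tendsto_from 1 h1
      have : Filter.Tendsto (fun n => r (n + 1)) Filter.atTop (nhds 0) := by
        simpa [add_comm] using this
      exact (Filter.tendsto_add_atTop_iff_nat 1).mp this
end

section
/- Consider the gradient-descent iteration under the stated setup with d = 2, and define β₀ = (1, x), β₁ = (x, −1) ∈ ℝ². Suppose for each t the vectors w²_{t,+} and w²_{t,−} (coordinate-wise squares) are decomposed as w²_{t,+} = p⁰_t β₀ + p¹_t β₁ + β*/2 and w²_{t,−} = q⁰_t β₀ + q¹_t β₁ − β*/2, and write 𝐩_t = (p⁰_t, p¹_t), 𝐪_t = (q⁰_t, q¹_t) ∈ ℝ². Then, with r_t = (1+x²)(p⁰_t − q⁰_t), the coefficient vectors satisfy 𝐩_{t+1} = (I − 2η r_t A + η² r_t² B)·𝐩_t − (2η r_t − η² r_t²)·μ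 β₀/(2(1+x²)) and 𝐪_{t+1} = (I + 2η r_t A + η² r_t² B)·𝐪_t − (2η r_t + η² r_t²)·μ β₀/(2(1+x²)), where A = (1/(1+x²))·[[1 + x³, x(1−x)], [x(1−x), x(1+x)]] and B = (1/(1+x²))·[[1 + x⁴, x(1−x²)], [x(1−x²), 2x²]]. -/
/-!
A gradient step multiplies `w₊ ⊙ w₊` coordinatewise by `(1 - s𝐱) ⊙ (1 - s𝐱) = 1 - 2s𝐱 + s² 𝐱 ⊙ 𝐱`
with `s = η r_t`, and `w₋ ⊙ w₋` likewise with `s = -η r_t`. Since `β₀ ⊥ β₁` and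
`‖β₀‖² = ‖β₁‖² = 1 + x²`, coefficients in this basis are inner products divided by `1 + x²`;
in these coordinates multiplication by `𝐱` and by `𝐱 ⊙ 𝐱` becomes `A` and `B`, while the offset
`±β*/2 = ±(μ/2) e₁` is multiplied by `(1 - s)² - 1 = s² - 2s`, and `e₁` has coordinates
`β₀ / (1 + x²)`. The residual formula is `⟨𝐱, β₀⟩ = 1 + x²`, `⟨𝐱, β₁⟩ = 0`.
-/

open Matrix

/-- `Pᵀ diag(𝐱) P / (1 + x²)` for `P = [β₀ β₁]`. -/
noncomputable def linCoeffMatrix (x : ℝ) : Matrix (Fin 2) (Fin 2) ℝ :=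
  (1 / (1 + x ^ 2)) • !![1 + x ^ 3, x * (1 - x); x * (1 - x), x * (1 + x)]

/-- `Pᵀ diag(𝐱 ⊙ 𝐱) P / (1 + x²)` for `P = [β₀ β₁]`. -/
noncomputable def quadCoeffMatrix (x : ℝ) : Matrix (Fin 2) (Fin 2) ℝ :=
  (1 / (1 + x ^ 2)) • !![1 + x ^ 4, x * (1 - x ^ 2); x * (1 - x ^ 2), 2 * x ^ 2]

/-- `u ⊙ u = c 0 • β₀ + c 1 • β₁ + (ν / 2) • e₁`, with `ν = μ` for `w₊` and `ν = -μ` for `w₋`. -/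
def IsSqDecomp (x ν : ℝ) (u : ℝ × ℝ) (c : Fin 2 → ℝ) : Prop :=
  u.1 ^ 2 = c 0 + c 1 * x + ν / 2 ∧ u.2 ^ 2 = c 0 * x - c 1

namespace IsSqDecomp

variable {x ν : ℝ} {u : ℝ × ℝ} {c : Fin 2 → ℝ}

theorem coeff_eq (h : IsSqDecomp x ν u c) :
    c = (1 / (1 + x ^ 2)) • ![u.1 ^ 2 - ν / 2 + x * u.2 ^ 2, x * (u.1 ^ 2 - ν / 2) - u.2 ^ 2] := by
  have hx : 1 + x ^ 2 ≠ 0 := by positivity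
  ext i
  fin_cases i <;>
    simp only [Fin.zero_eta, Fin.mk_one, Pi.smul_apply, cons_val_zero, cons_val_one, cons_val_fin_one,
      smul_eq_mul, h.1, h.2] <;>
    field_simp <;> ring

theorem coeff_step {s : ℝ} {u' : ℝ × ℝ} {c' : Fin 2 → ℝ} (hc : IsSqDecomp x ν u c)
    (hc' : IsSqDecomp x ν u' c') (hu' : u' = ((1 - s) * u.1, (1 - s * x) * u.2)) :
    c' = (1 - (2 * s) • linCoeffMatrix x + s ^ 2 • quadCoeffMatrix x) *ᵥ c
      - (2 * s - s ^ 2) • (ν / (2 * (1 + x ^ 2))) • ![1, x] := by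
  have hx : 1 + x ^ 2 ≠ 0 := by positivity
  rw [hc'.coeff_eq, hu']
  ext i
  fin_cases i <;>
    simp only [Fin.zero_eta, Fin.mk_one, Pi.smul_apply, Pi.sub_apply, cons_val_zero, cons_val_one,
      cons_val_fin_one, smul_eq_mul, linCoeffMatrix, quadCoeffMatrix, mulVec_fin_two, Matrix.add_apply,
      Matrix.sub_apply, Matrix.smul_apply, one_fin_two, of_apply, cons_val', mul_pow, hc.1, hc.2] <;>
    field_simp <;> ring

end IsSqDecomp

theorem gd_pq_dynamics_general
    (μ η x : ℝ)
    (wp wm : ℕ → ℝ × ℝ) (r : ℕ → ℝ) (p q : ℕ → Fin 2 → ℝ)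
    (hr : ∀ t, r t =
      (((wp t).1 ^ 2 - (wm t).1 ^ 2) + x * ((wp t).2 ^ 2 - (wm t).2 ^ 2)) - μ)
    (hwp : ∀ t, wp (t + 1) =
      ((wp t).1 - η * r t * (1 * (wp t).1), (wp t).2 - η * r t * (x * (wp t).2)))
    (hwm : ∀ t, wm (t + 1) =
      ((wm t).1 + η * r t * (1 * (wm t).1), (wm t).2 + η * r t * (x * (wm t).2)))
    (hdecp : ∀ t, (wp t).1 ^ 2 = p t 0 * 1 + p t 1 * x + μ / 2 ∧
                  (wp t).2 ^ 2 = p t 0 * x + p t 1 * (-1) + 0)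
    (hdecq : ∀ t, (wm t).1 ^ 2 = q t 0 * 1 + q t 1 * x - μ / 2 ∧
                  (wm t).2 ^ 2 = q t 0 * x + q t 1 * (-1) - 0) :
    (∀ t, r t = (1 + x ^ 2) * (p t 0 - q t 0)) ∧
    (∀ t, p (t + 1) =
      ((1 : Matrix (Fin 2) (Fin 2) ℝ)
          - (2 * η * r t) •
              ((1 / (1 + x ^ 2)) •
                !![1 + x ^ 3, x * (1 - x); x * (1 - x), x * (1 + x)])
          + (η ^ 2 * r t ^ 2) •
              ((1 / (1 + x ^ 2)) •
                !![1 + x ^ 4, x * (1 - x ^ 2); x * (1 - x ^ 2), 2 * x ^ 2])).mulVec (p t)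
        - (2 * η * r t - η ^ 2 * r t ^ 2) • (μ / (2 * (1 + x ^ 2))) • ![(1 : ℝ), x]) ∧
    (∀ t, q (t + 1) =
      ((1 : Matrix (Fin 2) (Fin 2) ℝ)
          + (2 * η * r t) •
              ((1 / (1 + x ^ 2)) •
                !![1 + x ^ 3, x * (1 - x); x * (1 - x), x * (1 + x)])
          + (η ^ 2 * r t ^ 2) •
              ((1 / (1 + x ^ 2)) •
                !![1 + x ^ 4, x * (1 - x ^ 2); x * (1 - x ^ 2), 2 * x ^ 2])).mulVec (q t)
        - (2 * η * r t + η ^ 2 * r t ^ 2) • (μ / (2 * (1 + x ^ 2))) • ![(1 : ℝ), x]) := by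
  have hP (t : ℕ) : IsSqDecomp x μ (wp t) (p t) :=
    ⟨by linear_combination (hdecp t).1, by linear_combination (hdecp t).2⟩
  have hQ (t : ℕ) : IsSqDecomp x (-μ) (wm t) (q t) :=
    ⟨by linear_combination (hdecq t).1, by linear_combination (hdecq t).2⟩
  refine ⟨fun t => ?_, fun t => ?_, fun t => ?_⟩
  · linear_combination hr t + (hP t).1 - (hQ t).1 + x * (hP t).2 - x * (hQ t).2
  · rw [(hP t).coeff_step (s := η * r t) (hP (t + 1))
      ((hwp t).trans (Prod.ext (by ring) (by ring)))]
    congr 1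
    · congr 1
      simp only [linCoeffMatrix, quadCoeffMatrix]
      module
    · module
  · rw [(hQ t).coeff_step (s := -(η * r t)) (hQ (t + 1))
      ((hwm t).trans (Prod.ext (by ring) (by ring)))]
    congr 1
    · congr 1
      simp only [linCoeffMatrix, quadCoeffMatrix]
      module
    · module

theorem gd_pq_dynamics
    (μ η α x : ℝ) (hμ : μ ≠ 0) (hη : 0 < η) (hα : 0 < α)
    (wp wm : ℕ → ℝ × ℝ) (r : ℕ → ℝ) (p q : ℕ → Fin 2 → ℝ)
    (hr : ∀ t, r t =
      (((wp t).1 ^ 2 - (wm t).1 ^ 2) + x * ((wp t).2 ^ 2 - (wm t).2 ^ 2)) - μ)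
    (hwp : ∀ t, wp (t + 1) =
      ((wp t).1 - η * r t * (1 * (wp t).1), (wp t).2 - η * r t * (x * (wp t).2)))
    (hwm : ∀ t, wm (t + 1) =
      ((wm t).1 + η * r t * (1 * (wm t).1), (wm t).2 + η * r t * (x * (wm t).2)))
    (hdecp : ∀ t, (wp t).1 ^ 2 = p t 0 * 1 + p t 1 * x + μ / 2 ∧
                  (wp t).2 ^ 2 = p t 0 * x + p t 1 * (-1) + 0)
    (hdecq : ∀ t, (wm t).1 ^ 2 = q t 0 * 1 + q t 1 * x - μ / 2 ∧
                  (wm t).2 ^ 2 = q t 0 * x + q t 1 * (-1) - 0) :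
    (∀ t, r t = (1 + x ^ 2) * (p t 0 - q t 0)) ∧
    (∀ t, p (t + 1) =
      ((1 : Matrix (Fin 2) (Fin 2) ℝ)
          - (2 * η * r t) •
              ((1 / (1 + x ^ 2)) •
                !![1 + x ^ 3, x * (1 - x); x * (1 - x), x * (1 + x)])
          + (η ^ 2 * r t ^ 2) •
              ((1 / (1 + x ^ 2)) •
                !![1 + x ^ 4, x * (1 - x ^ 2); x * (1 - x ^ 2), 2 * x ^ 2])).mulVec (p t)
        - (2 * η * r t - η ^ 2 * r t ^ 2) • (μ / (2 * (1 + x ^ 2))) • ![(1 : ℝ), x]) ∧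
    (∀ t, q (t + 1) =
      ((1 : Matrix (Fin 2) (Fin 2) ℝ)
          + (2 * η * r t) •
              ((1 / (1 + x ^ 2)) •
                !![1 + x ^ 3, x * (1 - x); x * (1 - x), x * (1 + x)])
          + (η ^ 2 * r t ^ 2) •
              ((1 / (1 + x ^ 2)) •
                !![1 + x ^ 4, x * (1 - x ^ 2); x * (1 - x ^ 2), 2 * x ^ 2])).mulVec (q t)
        - (2 * η * r t + η ^ 2 * r t ^ 2) • (μ / (2 * (1 + x ^ 2))) • ![(1 : ℝ), x]) :=
  gd_pq_dynamics_general μ η x wp wm r p q hr hwp hwm hdecp hdecq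
end

section
/- Consider the (r, s) system with ημ ∈ (0, 1), s_{t₀} ≥ 0 and a_{t₀} ≥ 0, and suppose r_t · r_{t+1} < 0 for all t ≥ t₀. Then there exist constants C > 0 and c ∈ (0, 1) (depending only on μη and x) such that |r_t| ≤ C·e^{−c·(t − t₀)}·|r_{t₀}| for all t ≥ t₀, so that r_t → 0; moreover s_t converges to a limit s_∞ satisfying s_∞ ≤ exp(2xη² r_{t₀}²/c)·s_{t₀}. -/
/-!
STATEMENT 11: for the (r,s) system with ημ ∈ (0,1), s_{t₀} ≥ 0, a_{t₀} ≥ 0 and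
r_t r_{t+1} < 0 for all t ≥ t₀, there are constants C > 0 and c ∈ (0,1) with
|r_t| ≤ C e^{−c(t−t₀)} |r_{t₀}| for all t ≥ t₀ (so r_t → 0), and s_t converges
to a limit s_∞ ≤ exp(2xη² r_{t₀}²/c) s_{t₀}.
-/

set_option maxHeartbeats 2000000

private lemma stepA' (μ η x rt rt1 st : ℝ) (hη : 0 < η) (hx0 : 0 < x)
    (hrec : rt1 = ((1 - 2*μ*η) + 2*st - η*(2-μ*η)*rt + η^2*rt^2 - (1+x)*η*rt*st) * rt)
    (hs : 0 ≤ st) (ho : rt * rt1 < 0) (hr : rt < 0) :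
    η*(2-μ*η) * (-rt) < 2*μ*η - 1 ∧ 0 < rt1 ∧
      rt1 ≤ ((2*μ*η-1) - η*(2-μ*η)*(-rt)) * (-rt) := by
  set M := (1 - 2*μ*η) + 2*st - η*(2-μ*η)*rt + η^2*rt^2 - (1+x)*η*rt*st with hM
  have hr2 : 0 < rt^2 := by nlinarith
  have hMneg : M < 0 := by
    rcases lt_or_ge M 0 with h | h
    · exact h
    · exfalso; rw [hrec] at ho; nlinarith [mul_nonneg h hr2.le]
  have hq : 0 < -rt := by linarith
  have hlow : -(2*μ*η-1) + η*(2-μ*η)*(-rt) ≤ M := by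
    have h1 : 0 ≤ η^2*rt^2 := by positivity
    have h2 : 0 ≤ (1+x)*η*(-rt)*st := by positivity
    nlinarith
  refine ⟨by nlinarith, ?_, ?_⟩
  · rw [hrec]; exact mul_pos_of_neg_of_neg hMneg hr
  · have := mul_le_mul_of_nonpos_right hlow hr.le
    rw [hrec]; nlinarith

private lemma stepB' (μ η x rt rt1 st : ℝ) (hx0 : 0 < x) (hx1 : x < 1)
    (hrec : rt1 = ((1 - 2*μ*η) + 2*st - η*(2-μ*η)*rt + η^2*rt^2 - (1+x)*η*rt*st) * rt)
    (hs : 0 ≤ st) (ho : rt * rt1 < 0) (hr : 0 < rt) (h1 : η * rt ≤ 1) :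
    rt1 < 0 ∧ -rt1 ≤ ((2*μ*η-1) + η*(2-μ*η)*rt) * rt := by
  set M := (1 - 2*μ*η) + 2*st - η*(2-μ*η)*rt + η^2*rt^2 - (1+x)*η*rt*st with hM
  have hr2 : 0 < rt^2 := by positivity
  have hMneg : M < 0 := by
    rcases lt_or_ge M 0 with h | h
    · exact h
    · exfalso; rw [hrec] at ho; nlinarith [mul_nonneg h hr2.le]
  have hup : -((2*μ*η-1) + η*(2-μ*η)*rt) ≤ M := by
    have h2 : 0 ≤ st * (2 - (1+x)*η*rt) := by
      apply mul_nonneg hs; nlinarith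
    nlinarith [sq_nonneg (η*rt)]
  constructor
  · rw [hrec]; exact mul_neg_of_neg_of_pos hMneg hr
  · have := mul_le_mul_of_nonneg_right hup hr.le
    rw [hrec]; nlinarith

private lemma stepC' (μ η x rt rt1 rt2 st st1 : ℝ) (hη : 0 < η) (hx0 : 0 < x) (hx1 : x < 1)
    (hμη1 : η * μ < 1)
    (hrec1 : rt1 = ((1 - 2*μ*η) + 2*st - η*(2-μ*η)*rt + η^2*rt^2 - (1+x)*η*rt*st) * rt)
    (hrec2 : rt2 = ((1 - 2*μ*η) + 2*st1 - η*(2-μ*η)*rt1 + η^2*rt1^2 - (1+x)*η*rt1*st1) * rt1)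
    (hs : 0 ≤ st) (hs1 : 0 ≤ st1) (ho : rt * rt1 < 0) (ho1 : rt1 * rt2 < 0)
    (hr : rt < 0) :
    rt2 < 0 ∧ -rt2 ≤ (2*μ*η-1)^2 * (-rt) ∧ 0 < 2*μ*η-1 ∧
      0 < rt1 ∧ rt1 ≤ (2*μ*η-1) * (-rt) ∧ η * (-rt) < 1 := by
  obtain ⟨h1, h2, h3⟩ := stepA' μ η x rt rt1 st hη hx0 hrec1 hs ho hr
  have hq : 0 < -rt := by linarith
  have hK1 : 2*μ*η - 1 < 1 := by linarith [mul_comm η μ, hμη1]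
  have hAq : 0 < η*(2-μ*η) * (-rt) := by
    have : (0:ℝ) < 2 - μ*η := by nlinarith
    positivity
  have hK0 : 0 < 2*μ*η - 1 := lt_trans hAq h1
  have hηq1 : η * (-rt) < 1 := by nlinarith
  have hpq : rt1 ≤ (2*μ*η-1) * (-rt) := by nlinarith
  have hp1 : η * rt1 ≤ 1 := by nlinarith
  obtain ⟨h4, h5⟩ := stepB' μ η x rt1 rt2 st1 hx0 hx1 hrec2 hs1 ho1 h2 hp1
  refine ⟨h4, ?_, hK0, h2, hpq, hηq1⟩
  have hpq' : rt1 ≤ -rt := by nlinarith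
  nlinarith [mul_le_mul_of_nonneg_left h3 (show (0:ℝ) ≤ (2*μ*η-1) + η*(2-μ*η)*rt1 by nlinarith),
    mul_le_mul_of_nonneg_right hpq' (mul_pos hAq hK0).le, mul_pos h2 hq, mul_pos hAq h2]

theorem rs_system_small_stepsize_convergence
    (μ η x : ℝ) (hμ : 0 < μ) (hη : 0 < η) (hx0 : 0 < x) (hx1 : x < 1)
    (hμη0 : 0 < η * μ) (hμη1 : η * μ < 1)
    (r s : ℕ → ℝ) (t0 : ℕ)
    (hrrec : ∀ t, r (t + 1) =
      -(2 * μ * η - 1) * r t - (2 * η - μ * η ^ 2) * (r t) ^ 2 + η ^ 2 * (r t) ^ 3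
        + 2 * (r t) * (s t) - (1 + x) * η * (r t) ^ 2 * (s t))
    (hsrec : ∀ t, s (t + 1) =
      s t - 2 * x * η * (r t) * (s t) + x ^ 2 * η ^ 2 * (r t) ^ 2 * (s t))
    (hs0 : 0 ≤ s t0)
    (ha0 : 0 ≤ (r t0 + μ) / (1 + x ^ 2) - x * (s t0 / (η * (x * (1 - x) * (1 + x ^ 2)))))
    (hosc : ∀ t ≥ t0, r t * r (t + 1) < 0) :
    ∃ C c : ℝ, 0 < C ∧ 0 < c ∧ c < 1 ∧
      (∀ t ≥ t0, |r t| ≤ C * Real.exp (-(c * ((t : ℝ) - (t0 : ℝ)))) * |r t0|) ∧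
      Filter.Tendsto r Filter.atTop (nhds 0) ∧
      ∃ sinf : ℝ, Filter.Tendsto s Filter.atTop (nhds sinf) ∧
        sinf ≤ Real.exp (2 * x * η ^ 2 * (r t0) ^ 2 / c) * s t0 := by
  have hmfact : ∀ t, r (t+1) =
      ((1 - 2*μ*η) + 2*s t - η*(2-μ*η)*r t + η^2*(r t)^2 - (1+x)*η*(r t)*(s t)) * r t := by
    intro t; rw [hrrec]; ring
  have hsfact : ∀ u, s (u+1) = (1 - x*η*r u)^2 * s u := fun u => by rw [hsrec]; ring
  have hsnn : ∀ t, t0 ≤ t → 0 ≤ s t := by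
    intro t ht
    induction t, ht using Nat.le_induction with
    | base => exact hs0
    | succ n hn ih => rw [hsfact]; positivity
  have hrt0ne : r t0 ≠ 0 := by
    intro h; have h2 := hosc t0 le_rfl; rw [h] at h2; simp at h2
  obtain ⟨t1, ht01, ht10, hrt1⟩ : ∃ t1, t0 ≤ t1 ∧ t1 ≤ t0 + 1 ∧ r t1 < 0 := by
    rcases lt_trichotomy (r t0) 0 with h | h | h
    · exact ⟨t0, le_rfl, Nat.le_succ t0, h⟩
    · exact absurd h hrt0ne
    · refine ⟨t0+1, Nat.le_succ t0, le_rfl, ?_⟩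
      have h2 := hosc t0 le_rfl
      nlinarith
  have hC2 : ∀ t, t0 ≤ t → r t < 0 →
      r (t+2) < 0 ∧ -(r (t+2)) ≤ (2*μ*η-1)^2 * (-(r t)) ∧ 0 < 2*μ*η-1 ∧
        0 < r (t+1) ∧ r (t+1) ≤ (2*μ*η-1) * (-(r t)) ∧ η * (-(r t)) < 1 := by
    intro t ht hr
    exact stepC' μ η x (r t) (r (t+1)) (r (t+2)) (s t) (s (t+1)) hη hx0 hx1 hμη1
      (hmfact t) (hmfact (t+1)) (hsnn t ht) (hsnn (t+1) (le_trans ht (Nat.le_succ t)))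
      (hosc t ht) (hosc (t+1) (le_trans ht (Nat.le_succ t))) hr
  set K := 2*μ*η - 1 with hKdef
  have hfirst := hC2 t1 ht01 hrt1
  have hK0 : 0 < K := hfirst.2.2.1
  have hK1 : K < 1 := by rw [hKdef]; linarith [mul_comm η μ, hμη1]
  have hηr1 : η * (-(r t1)) < 1 := hfirst.2.2.2.2.2
  have habs1 : |r t1| = -(r t1) := abs_of_neg hrt1
  -- negative (even) subsequence
  have heven : ∀ n, r (t1 + 2*n) < 0 ∧ -(r (t1 + 2*n)) ≤ K^(2*n) * (-(r t1)) := by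
    intro n
    induction n with
    | zero => exact ⟨by simpa using hrt1, by simp⟩
    | succ n ih =>
      have ht : t0 ≤ t1 + 2*n := le_trans ht01 (Nat.le_add_right _ _)
      have h := hC2 (t1+2*n) ht ih.1
      have he : t1 + 2*(n+1) = (t1 + 2*n) + 2 := by ring
      refine ⟨by rw [he]; exact h.1, ?_⟩
      rw [he, show 2*(n+1) = 2*n+1+1 from by ring, pow_succ, pow_succ]
      nlinarith [ih.2, h.2.1, pow_nonneg hK0.le (2*n), h.1]
  -- all steps
  have hall : ∀ n, |r (t1 + n)| ≤ K^n * |r t1| := by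
    intro n
    rcases Nat.even_or_odd n with ⟨j, hj⟩ | ⟨j, hj⟩
    · subst hj
      have h := heven j
      rw [show j + j = 2*j from (two_mul j).symm]
      rw [abs_of_neg h.1, habs1]
      exact h.2
    · subst hj
      have hj2 := heven j
      have ht : t0 ≤ t1 + 2*j := le_trans ht01 (Nat.le_add_right _ _)
      have h := hC2 (t1+2*j) ht hj2.1
      rw [show t1 + (2*j+1) = (t1 + 2*j) + 1 from by ring]
      rw [abs_of_pos h.2.2.2.1, habs1, pow_succ]
      nlinarith [h.2.2.2.2.1, hj2.2, pow_nonneg hK0.le (2*j), hj2.1]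
  
  -- per-step bound for s
  have hsstep : ∀ u, 0 ≤ s u → s (u+1) ≤ Real.exp (2*x*η*|r u|) * s u := by
    intro u hsu
    rw [hsfact u]
    have h1 : |1 - x*η*r u| ≤ 1 + x*η*|r u| := by
      have h := abs_add_le (1:ℝ) (-(x*η*r u))
      rw [abs_neg] at h
      simp only [abs_one] at h
      rw [sub_eq_add_neg]
      calc |1 + -(x*η*r u)| ≤ 1 + |x*η*r u| := h
        _ = 1 + x*η*|r u| := by rw [abs_mul, abs_mul, abs_of_pos hx0, abs_of_pos hη]
    have h2 : (1 - x*η*r u)^2 ≤ (1 + x*η*|r u|)^2 := by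
      rw [← sq_abs (1 - x*η*r u)]
      exact pow_le_pow_left₀ (abs_nonneg _) h1 2
    have h4 : 1 + x*η*|r u| ≤ Real.exp (x*η*|r u|) := by
      have := Real.add_one_le_exp (x*η*|r u|); linarith
    have h5 : (0:ℝ) ≤ 1 + x*η*|r u| := by positivity
    have h3 : (1 + x*η*|r u|)^2 ≤ Real.exp (2*x*η*|r u|) := by
      calc (1 + x*η*|r u|)^2 ≤ (Real.exp (x*η*|r u|))^2 := pow_le_pow_left₀ h5 h4 2
        _ = Real.exp (2*x*η*|r u|) := by rw [sq, ← Real.exp_add]; ring_nf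
    have := mul_le_mul_of_nonneg_right (le_trans h2 h3) hsu
    linarith
  set g := 2*x*η*|r t1| with hgdef
  have hg0 : 0 ≤ g := by positivity
  have h1K : 0 < 1 - K := by linarith
  have hsles : ∀ n, s (t1 + n) ≤ Real.exp (g * (1 - K^n)/(1-K)) * s t1 := by
    intro n
    induction n with
    | zero =>
      simp only [Nat.add_zero, pow_zero, sub_self, mul_zero, zero_div, Real.exp_zero, one_mul]
      exact le_refl _
    | succ n ih =>
      have hu : t0 ≤ t1 + n := le_trans ht01 (Nat.le_add_right _ _)
      have h1 := hsstep (t1+n) (hsnn _ hu)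
      have h3 : s (t1+n+1) ≤ Real.exp (g * K^n) * s (t1+n) := by
        refine le_trans h1 (mul_le_mul_of_nonneg_right ?_ (hsnn _ hu))
        apply Real.exp_le_exp.2
        calc 2*x*η*|r (t1+n)| ≤ 2*x*η*(K^n * |r t1|) := by
              apply mul_le_mul_of_nonneg_left (hall n) (by positivity)
          _ = g * K^n := by rw [hgdef]; ring
      calc s (t1+(n+1)) ≤ Real.exp (g*K^n) * s (t1+n) := h3
        _ ≤ Real.exp (g*K^n) * (Real.exp (g*(1-K^n)/(1-K)) * s t1) :=
            mul_le_mul_of_nonneg_left ih (Real.exp_pos _).le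
        _ = Real.exp (g*K^n + g*(1-K^n)/(1-K)) * s t1 := by rw [← mul_assoc, ← Real.exp_add]
        _ = Real.exp (g*(1-K^(n+1))/(1-K)) * s t1 := by
            congr 1
            field_simp
            ring
  have hst1 : 0 ≤ s t1 := hsnn t1 ht01
  have hsB : ∀ n, s (t1 + n) ≤ Real.exp (g/(1-K)) * s t1 := by
    intro n
    refine le_trans (hsles n) (mul_le_mul_of_nonneg_right (Real.exp_le_exp.2 ?_) hst1)
    have hKn : 0 ≤ K^n := pow_nonneg hK0.le n
    rw [div_le_div_iff₀ h1K h1K]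
    nlinarith [mul_nonneg (mul_nonneg hg0 h1K.le) hKn]
  set L0 := 2*x*η*|r t0| with hL0def
  have hsL0 : s t1 ≤ Real.exp L0 * s t0 := by
    rcases Nat.eq_or_lt_of_le ht01 with h | h
    · rw [← h]
      have : (1:ℝ) ≤ Real.exp L0 := by
        have := Real.add_one_le_exp L0
        have : (0:ℝ) ≤ L0 := by positivity
        nlinarith [Real.add_one_le_exp L0]
      nlinarith
    · have : t1 = t0 + 1 := by omega
      rw [this]
      exact hsstep t0 hs0
  set E := Real.exp (L0 + g/(1-K)) with hEdef
  have hsglobal : ∀ n, s (t1 + n) ≤ E * s t0 := by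
    intro n
    calc s (t1+n) ≤ Real.exp (g/(1-K)) * s t1 := hsB n
      _ ≤ Real.exp (g/(1-K)) * (Real.exp L0 * s t0) :=
          mul_le_mul_of_nonneg_left hsL0 (Real.exp_pos _).le
      _ = E * s t0 := by rw [hEdef, Real.exp_add]; ring
  have hE0 : 0 < E := Real.exp_pos _
  -- Cauchy sequence for s
  have hηrt1 : η * |r t1| < 1 := by rw [habs1]; exact hηr1
  have hdiff : ∀ n, dist (s (t1+n)) (s (t1+n+1)) ≤ (3*x*η*|r t1| * (E * s t0)) * K^n := by
    intro n
    have hu : t0 ≤ t1 + n := le_trans ht01 (Nat.le_add_right _ _)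
    have hsu : 0 ≤ s (t1+n) := hsnn _ hu
    have hru : |r (t1+n)| ≤ K^n * |r t1| := hall n
    have hKn1 : K^n ≤ 1 := pow_le_one₀ hK0.le hK1.le
    have hrle : |r (t1+n)| ≤ |r t1| := by
      calc |r (t1+n)| ≤ K^n * |r t1| := hru
        _ ≤ 1 * |r t1| := mul_le_mul_of_nonneg_right hKn1 (abs_nonneg _)
        _ = |r t1| := one_mul _
    have hxr : x*η*|r (t1+n)| ≤ 1 := by
      nlinarith [mul_le_mul_of_nonneg_left hrle hη.le, abs_nonneg (r (t1+n))]
    rw [Real.dist_eq]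
    have heq : s (t1+n) - s (t1+n+1) = (2*x*η*(r (t1+n)) - x^2*η^2*(r (t1+n))^2) * s (t1+n) := by
      rw [hsrec]; ring
    rw [heq, abs_mul, abs_of_nonneg hsu]
    have h7 : x^2*η^2*(r (t1+n))^2 ≤ x*η*|r (t1+n)| := by
      have e : x^2*η^2*(r (t1+n))^2 = (x*η*|r (t1+n)|)^2 := by
        rw [mul_pow, mul_pow, sq_abs]
      rw [e]
      nlinarith [hxr, (show (0:ℝ) ≤ x*η*|r (t1+n)| by positivity)]
    have h6 : |2*x*η*(r (t1+n)) - x^2*η^2*(r (t1+n))^2| ≤ 3*x*η*|r (t1+n)| := by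
      rw [abs_le]
      constructor
      · nlinarith [neg_abs_le (r (t1+n)), le_abs_self (r (t1+n)), abs_nonneg (r (t1+n))]
      · nlinarith [le_abs_self (r (t1+n)), sq_nonneg (x*η*(r (t1+n))), abs_nonneg (r (t1+n))]
    calc |2*x*η*(r (t1+n)) - x^2*η^2*(r (t1+n))^2| * s (t1+n)
        ≤ (3*x*η*|r (t1+n)|) * s (t1+n) := mul_le_mul_of_nonneg_right h6 hsu
      _ ≤ (3*x*η*(K^n * |r t1|)) * (E * s t0) := by
          apply mul_le_mul (by nlinarith [abs_nonneg (r (t1+n))]) (hsglobal n) hsu (by positivity)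
      _ = (3*x*η*|r t1| * (E * s t0)) * K^n := by ring
  have hcauchy : CauchySeq (fun n => s (t1 + n)) :=
    cauchySeq_of_le_geometric K (3*x*η*|r t1| * (E * s t0)) hK1 hdiff
  obtain ⟨sinf, hsinf⟩ := cauchySeq_tendsto_of_complete hcauchy
  have hs_tendsto : Filter.Tendsto s Filter.atTop (nhds sinf) := by
    rw [← Filter.tendsto_add_atTop_iff_nat t1]
    have : (fun n => s (n + t1)) = fun n => s (t1 + n) := by
      funext n; rw [Nat.add_comm]
    rw [this]
    exact hsinf
  have hsinf_le : sinf ≤ E * s t0 :=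
    le_of_tendsto hsinf (Filter.Eventually.of_forall hsglobal)
  
  -- constants
  have habs0 : 0 < |r t0| := abs_pos.2 hrt0ne
  have hr02 : 0 < (r t0)^2 := by rw [← sq_abs]; exact pow_pos habs0 2
  set A2 := 2*x*η^2*(r t0)^2 with hA2def
  have hA2 : 0 < A2 := by
    rw [hA2def]; exact mul_pos (by positivity) hr02
  set M := max 1 (L0 + g/(1-K)) with hMdef
  have hM1 : (1:ℝ) ≤ M := le_max_left _ _
  have hM0 : 0 < M := lt_of_lt_of_le one_pos hM1
  set c := min (min (1-K) (1/2)) (A2/M) with hcdef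
  have hc0 : 0 < c := lt_min (lt_min h1K (by norm_num)) (div_pos hA2 hM0)
  have hc12 : c ≤ 1/2 := le_trans (min_le_left _ _) (min_le_right _ _)
  have hc1 : c < 1 := lt_of_le_of_lt hc12 (by norm_num)
  have hc1K : c ≤ 1-K := le_trans (min_le_left _ _) (min_le_left _ _)
  have hcA : c ≤ A2/M := min_le_right _ _
  have hKexp : K ≤ Real.exp (-c) := by
    have h1 : K - 1 ≤ -c := by linarith
    calc K = (K-1) + 1 := by ring
      _ ≤ Real.exp (K-1) := Real.add_one_le_exp _
      _ ≤ Real.exp (-c) := Real.exp_le_exp.2 h1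
  set Cc := Real.exp 1 * (1 + |r (t0+1)| / |r t0|) with hCdef
  have hd0 : 0 ≤ |r (t0+1)| / |r t0| := div_nonneg (abs_nonneg _) (abs_nonneg _)
  have he1 : (1:ℝ) ≤ Real.exp 1 := by
    have := Real.add_one_le_exp (1:ℝ); linarith
  have hC1 : (1:ℝ) ≤ Cc := by
    rw [hCdef]
    have h := mul_le_mul he1 (by linarith : (1:ℝ) ≤ 1 + |r (t0+1)| / |r t0|)
      (by norm_num) (by positivity)
    linarith
  have hC0 : 0 < Cc := lt_of_lt_of_le one_pos hC1
  have hrt1b : |r t1| ≤ (1 + |r (t0+1)| / |r t0|) * |r t0| := by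
    rcases Nat.eq_or_lt_of_le ht01 with h | h
    · rw [← h]
      calc |r t0| = 1 * |r t0| := (one_mul _).symm
        _ ≤ (1 + |r (t0+1)| / |r t0|) * |r t0| :=
            mul_le_mul_of_nonneg_right (by linarith) (abs_nonneg _)
    · have ht1e : t1 = t0 + 1 := by omega
      rw [ht1e]
      have hdm : |r (t0+1)| / |r t0| * |r t0| = |r (t0+1)| := div_mul_cancel₀ _ habs0.ne'
      calc |r (t0+1)| = |r (t0+1)| / |r t0| * |r t0| := hdm.symm
        _ ≤ (1 + |r (t0+1)| / |r t0|) * |r t0| :=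
            mul_le_mul_of_nonneg_right (by linarith) (abs_nonneg _)
  -- decay bound
  have hdecay : ∀ t, t0 ≤ t → |r t| ≤ Cc * Real.exp (-(c*((t:ℝ)-(t0:ℝ)))) * |r t0| := by
    intro t ht
    rcases lt_or_ge t t1 with hlt | hge
    · have ht_eq : t = t0 := by omega
      subst ht_eq
      rw [sub_self, mul_zero, neg_zero, Real.exp_zero, mul_one]
      calc |r t| = 1 * |r t| := (one_mul _).symm
        _ ≤ Cc * |r t| := mul_le_mul_of_nonneg_right hC1 (abs_nonneg _)
    · obtain ⟨n, rfl⟩ : ∃ n, t = t1 + n := ⟨t - t1, by omega⟩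
      have h1 := hall n
      have h2 : K^n ≤ Real.exp (-c)^n := pow_le_pow_left₀ hK0.le hKexp n
      have h3 : Real.exp (-c)^n = Real.exp (-(c*(n:ℝ))) := by
        rw [← Real.exp_nat_mul]; ring_nf
      have hcast : ((t1+n : ℕ):ℝ) = (t1:ℝ) + (n:ℝ) := by push_cast; ring
      have ht1r : (t1:ℝ) - (t0:ℝ) ≤ 1 := by
        have : (t1:ℝ) ≤ (t0:ℝ) + 1 := by exact_mod_cast ht10
        linarith
      have ht1r0 : 0 ≤ (t1:ℝ) - (t0:ℝ) := by
        have : (t0:ℝ) ≤ (t1:ℝ) := by exact_mod_cast ht01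
        linarith
      have h5 : Real.exp (-(c*(n:ℝ))) ≤ Real.exp 1 * Real.exp (-(c*(((t1+n:ℕ):ℝ) - (t0:ℝ)))) := by
        rw [← Real.exp_add]
        apply Real.exp_le_exp.2
        rw [hcast]
        linarith [mul_nonneg hc0.le (by linarith : (0:ℝ) ≤ 1 - ((t1:ℝ)-(t0:ℝ))), hc12]
      calc |r (t1+n)| ≤ K^n * |r t1| := h1
        _ ≤ Real.exp (-(c*(n:ℝ))) * |r t1| := by
            rw [← h3]; exact mul_le_mul_of_nonneg_right h2 (abs_nonneg _)
        _ ≤ (Real.exp 1 * Real.exp (-(c*(((t1+n:ℕ):ℝ) - (t0:ℝ))))) * ((1 + |r (t0+1)|/|r t0|) * |r t0|) :=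
            mul_le_mul h5 hrt1b (abs_nonneg _) (by positivity)
        _ = Cc * Real.exp (-(c*(((t1+n:ℕ):ℝ)-(t0:ℝ)))) * |r t0| := by rw [hCdef]; ring
  -- r tends to 0
  have hePos : 0 < Real.exp (-c) := Real.exp_pos _
  have hq1 : Real.exp (-c) < 1 := by
    rw [← Real.exp_zero]
    exact Real.exp_lt_exp.2 (by linarith)
  have hrtend : Filter.Tendsto r Filter.atTop (nhds 0) := by
    apply squeeze_zero_norm' (a := fun t : ℕ => (|r t1| / Real.exp (-c)^t1) * Real.exp (-c)^t)
    · filter_upwards [Filter.eventually_ge_atTop t1] with t ht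
      obtain ⟨n, rfl⟩ : ∃ n, t = t1 + n := ⟨t - t1, by omega⟩
      have h2 : K^n ≤ Real.exp (-c)^n := pow_le_pow_left₀ hK0.le hKexp n
      rw [Real.norm_eq_abs]
      calc |r (t1+n)| ≤ K^n * |r t1| := hall n
        _ ≤ Real.exp (-c)^n * |r t1| := mul_le_mul_of_nonneg_right h2 (abs_nonneg _)
        _ = (|r t1| / Real.exp (-c)^t1) * Real.exp (-c)^(t1+n) := by
            rw [pow_add]; field_simp
    · have h := Filter.Tendsto.const_mul (|r t1| / Real.exp (-c)^t1)
        (tendsto_pow_atTop_nhds_zero_of_lt_one hePos.le hq1)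
      simpa using h
  -- final bound on sinf
  have hMA : M ≤ A2/c := by
    rw [le_div_iff₀ hc0]
    have h := (le_div_iff₀ hM0).1 hcA
    rw [mul_comm]; exact h
  have hfinal : sinf ≤ Real.exp (2*x*η^2*(r t0)^2 / c) * s t0 := by
    have h1 : L0 + g/(1-K) ≤ M := le_max_right _ _
    have h2 : E ≤ Real.exp (A2/c) := by
      rw [hEdef]; exact Real.exp_le_exp.2 (le_trans h1 hMA)
    calc sinf ≤ E * s t0 := hsinf_le
      _ ≤ Real.exp (A2/c) * s t0 := mul_le_mul_of_nonneg_right h2 hs0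
      _ = Real.exp (2*x*η^2*(r t0)^2 / c) * s t0 := by rw [hA2def]
  refine ⟨Cc, c, hC0, hc0, hc1, fun t ht => ?_, hrtend, sinf, hs_tendsto, ?_⟩
  · have := hdecay t ht
    convert this using 3 <;> ring
  · convert hfinal using 3 <;> ring
end

section
/- Let μη ∈ (1, 2) and define g₀(ρ) = −(2μη − 1)ρ − (2η − μη²)ρ² + η²ρ³. Then: (1) the derivative g₀' vanishes exactly at ρ = 1/η (a local minimum of g₀) and ρ = −(2ημ − 1)/(3η) (a local maximum of g₀); consequently g₀ is monotonically decreasing on [−(2ημ − 1)/(3η), 1/η] and sign-changing there, i.e. ρ·g₀(ρ) ≤ 0 for ρ in this interval. (2) The points ρ_± = (1 − μη ± √(μ²η² + 2μη − 3))/(2η) are 2-periodic points of g₀: g₀(ρ₋) = ρ₊ and g₀(ρ₊) = ρ₋, hence g₀(g₀(ρ_±)) = ρ_±. -/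
/-!
Up to the factor `3η²`, the derivative of `g₀` is `(ρ - 1/η)(ρ + (2ημ - 1)/(3η))`, so the sign
pattern `+, -, +` of a quadratic with two real roots gives the critical points, their nature and the
monotonicity in between. On that interval `ρ g₀(ρ) = ρ² q(ρ)` with `q` a convex quadratic that is
nonpositive at both endpoints. Finally `ρ_±` are the roots of `η ρ² + (μη - 1) ρ + (μη - 1)/η`, and
the two-cycle identities are polynomial identities modulo `s² = μ²η² + 2μη - 3`.
-/

open Filter Set

section FactoredDerivative

variable {f : ℝ → ℝ} {c p q : ℝ} (hf : ∀ x, HasDerivAt f (c * (x - p) * (x - q)) x)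
include hf

theorem deriv_eq_zero_iff_of_deriv_factored (hc : c ≠ 0) (x : ℝ) :
    deriv f x = 0 ↔ x = p ∨ x = q := by
  simp [(hf x).deriv, hc, sub_eq_zero]

theorem isLocalMin_of_deriv_factored (hc : 0 ≤ c) (hqp : q < p) : IsLocalMin f p := by
  refine isLocalMin_of_deriv (hf p).continuousAt
    (Eventually.of_forall fun x => (hf x).differentiableAt) ?_ ?_
  · filter_upwards [Ioo_mem_nhdsLT hqp] with x hx
    rw [(hf x).deriv]
    exact mul_nonpos_of_nonpos_of_nonneg
      (mul_nonpos_of_nonneg_of_nonpos hc (by linarith [hx.2])) (by linarith [hx.1])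
  · filter_upwards [self_mem_nhdsWithin] with x (hx : p < x)
    rw [(hf x).deriv]
    exact mul_nonneg (mul_nonneg hc (by linarith)) (by linarith)

theorem isLocalMax_of_deriv_factored (hc : 0 ≤ c) (hqp : q < p) : IsLocalMax f q := by
  refine isLocalMax_of_deriv (hf q).continuousAt
    (Eventually.of_forall fun x => (hf x).differentiableAt) ?_ ?_
  · filter_upwards [self_mem_nhdsWithin] with x (hx : x < q)
    rw [(hf x).deriv]
    exact mul_nonneg_of_nonpos_of_nonpos
      (mul_nonpos_of_nonneg_of_nonpos hc (by linarith)) (by linarith)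
  · filter_upwards [Ioo_mem_nhdsGT hqp] with x hx
    rw [(hf x).deriv]
    exact mul_nonpos_of_nonpos_of_nonneg
      (mul_nonpos_of_nonneg_of_nonpos hc (by linarith [hx.2])) (by linarith [hx.1])

theorem antitoneOn_Icc_of_deriv_factored (hc : 0 ≤ c) : AntitoneOn f (Icc q p) := by
  refine antitoneOn_of_deriv_nonpos (convex_Icc q p)
    (HasDerivAt.continuousOn fun x _ => hf x)
    (fun x _ => (hf x).differentiableAt.differentiableWithinAt) fun x hx => ?_
  rw [interior_Icc] at hx
  rw [(hf x).deriv]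
  exact mul_nonpos_of_nonpos_of_nonneg
    (mul_nonpos_of_nonneg_of_nonpos hc (by linarith [hx.2])) (by linarith [hx.1])

end FactoredDerivative

/-- The map `g₀` of the paper. -/
def eosMap (μ η ρ : ℝ) : ℝ :=
  -(2 * μ * η - 1) * ρ - (2 * η - μ * η ^ 2) * ρ ^ 2 + η ^ 2 * ρ ^ 3

section EosMap

variable (μ : ℝ) {η : ℝ}

theorem hasDerivAt_eosMap (hη : η ≠ 0) (ρ : ℝ) :
    HasDerivAt (eosMap μ η)
      (3 * η ^ 2 * (ρ - 1 / η) * (ρ - -((2 * η * μ - 1) / (3 * η)))) ρ := by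
  have h := (((hasDerivAt_id ρ).const_mul (-(2 * μ * η - 1))).sub
    ((hasDerivAt_pow 2 ρ).const_mul (2 * η - μ * η ^ 2))).add
    ((hasDerivAt_pow 3 ρ).const_mul (η ^ 2))
  refine h.congr_deriv ?_
  field_simp
  ring

theorem mul_eosMap_nonpos (hη : 0 < η) (hμη : 1 < μ * η) {ρ : ℝ}
    (hρ : ρ ∈ Icc (-((2 * η * μ - 1) / (3 * η))) (1 / η)) : ρ * eosMap μ η ρ ≤ 0 := by
  have hleft : 0 ≤ 3 * η * ρ + (2 * η * μ - 1) := by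
    have := (div_le_iff₀ (by positivity : (0 : ℝ) < 3 * η)).mp (neg_div (3 * η) _ ▸ hρ.1)
    linarith
  have hright : η * ρ ≤ 1 := by
    have := (le_div_iff₀ hη).mp hρ.2
    linarith
  -- `q(ρ) := η²ρ² - (2η - μη²)ρ - (2μη - 1)` is convex with `q(1/η) = -μη` and
  -- `q(-(2ημ - 1)/(3η)) = -(2μη - 1)(μη + 4)/9`.
  have hq : η ^ 2 * ρ ^ 2 - (2 * η - μ * η ^ 2) * ρ - (2 * μ * η - 1) ≤ 0 := by
    nlinarith [mul_nonneg hleft (sub_nonneg.mpr hright)]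
  calc ρ * eosMap μ η ρ
      = ρ ^ 2 * (η ^ 2 * ρ ^ 2 - (2 * η - μ * η ^ 2) * ρ - (2 * μ * η - 1)) := by
        unfold eosMap; ring
    _ ≤ 0 := mul_nonpos_of_nonneg_of_nonpos (sq_nonneg ρ) hq

theorem eosMap_two_cycle (hη : η ≠ 0) {t : ℝ} (ht : t ^ 2 = μ ^ 2 * η ^ 2 + 2 * μ * η - 3) :
    eosMap μ η ((1 - μ * η - t) / (2 * η)) = (1 - μ * η + t) / (2 * η) := by
  unfold eosMap
  field_simp
  linear_combination (-t - 1 - μ * η) * ht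

end EosMap

theorem auxiliary_map_properties_general
    (μ η : ℝ) (hη : 0 < η)
    (hμη1 : 1 < μ * η)
    (g0 : ℝ → ℝ)
    (hg0 : ∀ ρ, g0 ρ = -(2 * μ * η - 1) * ρ - (2 * η - μ * η ^ 2) * ρ ^ 2 + η ^ 2 * ρ ^ 3) :
    (∀ ρ : ℝ, deriv g0 ρ = 0 ↔ (ρ = 1 / η ∨ ρ = -((2 * η * μ - 1) / (3 * η)))) ∧
    IsLocalMin g0 (1 / η) ∧
    IsLocalMax g0 (-((2 * η * μ - 1) / (3 * η))) ∧
    AntitoneOn g0 (Set.Icc (-((2 * η * μ - 1) / (3 * η))) (1 / η)) ∧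
    (∀ ρ ∈ Set.Icc (-((2 * η * μ - 1) / (3 * η))) (1 / η), ρ * g0 ρ ≤ 0) ∧
    g0 ((1 - μ * η - Real.sqrt (μ ^ 2 * η ^ 2 + 2 * μ * η - 3)) / (2 * η)) =
      (1 - μ * η + Real.sqrt (μ ^ 2 * η ^ 2 + 2 * μ * η - 3)) / (2 * η) ∧
    g0 ((1 - μ * η + Real.sqrt (μ ^ 2 * η ^ 2 + 2 * μ * η - 3)) / (2 * η)) =
      (1 - μ * η - Real.sqrt (μ ^ 2 * η ^ 2 + 2 * μ * η - 3)) / (2 * η) ∧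
    g0 (g0 ((1 - μ * η + Real.sqrt (μ ^ 2 * η ^ 2 + 2 * μ * η - 3)) / (2 * η))) =
      (1 - μ * η + Real.sqrt (μ ^ 2 * η ^ 2 + 2 * μ * η - 3)) / (2 * η) ∧
    g0 (g0 ((1 - μ * η - Real.sqrt (μ ^ 2 * η ^ 2 + 2 * μ * η - 3)) / (2 * η))) =
      (1 - μ * η - Real.sqrt (μ ^ 2 * η ^ 2 + 2 * μ * η - 3)) / (2 * η) := by
  obtain rfl : g0 = eosMap μ η := funext hg0
  have hderiv := hasDerivAt_eosMap μ hη.ne'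
  have hc : 0 < 3 * η ^ 2 := by positivity
  have hqp : -((2 * η * μ - 1) / (3 * η)) < 1 / η := by
    rw [neg_lt, ← sub_pos, sub_neg_eq_add, div_add_div _ _ (by positivity) hη.ne']
    exact div_pos (by nlinarith) (by positivity)
  have hs := Real.sq_sqrt (by nlinarith : 0 ≤ μ ^ 2 * η ^ 2 + 2 * μ * η - 3)
  have hminus := eosMap_two_cycle μ hη.ne' hs
  have hplus := eosMap_two_cycle μ hη.ne' (t := -Real.sqrt _) (by rw [neg_sq, hs])
  simp only [sub_neg_eq_add, ← sub_eq_add_neg] at hplus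
  exact ⟨deriv_eq_zero_iff_of_deriv_factored hderiv hc.ne',
    isLocalMin_of_deriv_factored hderiv hc.le hqp,
    isLocalMax_of_deriv_factored hderiv hc.le hqp,
    antitoneOn_Icc_of_deriv_factored hderiv hc.le,
    fun ρ hρ => mul_eosMap_nonpos μ hη hμη1 hρ,
    hminus, hplus, by rw [hplus, hminus], by rw [hminus, hplus]⟩

theorem auxiliary_map_properties
    (μ η : ℝ) (hμ : 0 < μ) (hη : 0 < η)
    (hμη1 : 1 < μ * η) (hμη2 : μ * η < 2)
    (g0 : ℝ → ℝ)
    (hg0 : ∀ ρ, g0 ρ = -(2 * μ * η - 1) * ρ - (2 * η - μ * η ^ 2) * ρ ^ 2 + η ^ 2 * ρ ^ 3) :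
    (∀ ρ : ℝ, deriv g0 ρ = 0 ↔ (ρ = 1 / η ∨ ρ = -((2 * η * μ - 1) / (3 * η)))) ∧
    IsLocalMin g0 (1 / η) ∧
    IsLocalMax g0 (-((2 * η * μ - 1) / (3 * η))) ∧
    AntitoneOn g0 (Set.Icc (-((2 * η * μ - 1) / (3 * η))) (1 / η)) ∧
    (∀ ρ ∈ Set.Icc (-((2 * η * μ - 1) / (3 * η))) (1 / η), ρ * g0 ρ ≤ 0) ∧
    g0 ((1 - μ * η - Real.sqrt (μ ^ 2 * η ^ 2 + 2 * μ * η - 3)) / (2 * η)) =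
      (1 - μ * η + Real.sqrt (μ ^ 2 * η ^ 2 + 2 * μ * η - 3)) / (2 * η) ∧
    g0 ((1 - μ * η + Real.sqrt (μ ^ 2 * η ^ 2 + 2 * μ * η - 3)) / (2 * η)) =
      (1 - μ * η - Real.sqrt (μ ^ 2 * η ^ 2 + 2 * μ * η - 3)) / (2 * η) ∧
    g0 (g0 ((1 - μ * η + Real.sqrt (μ ^ 2 * η ^ 2 + 2 * μ * η - 3)) / (2 * η))) =
      (1 - μ * η + Real.sqrt (μ ^ 2 * η ^ 2 + 2 * μ * η - 3)) / (2 * η) ∧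
    g0 (g0 ((1 - μ * η - Real.sqrt (μ ^ 2 * η ^ 2 + 2 * μ * η - 3)) / (2 * η))) =
      (1 - μ * η - Real.sqrt (μ ^ 2 * η ^ 2 + 2 * μ * η - 3)) / (2 * η) :=
  auxiliary_map_properties_general μ η hη hμη1 g0 hg0
end

section
/- Let μη ∈ (1, 2] and x ∈ (0, 1/(μη)). In the (r, s) system, suppose at time t one has α_t > 0 (i.e. s_t > μη − 1), s_t > 0, and r_t < 0. Then (1 − xη r_t)(1 − xη r_{t+1}) ≥ 1; consequently s_{t+2} ≥ s_t. -/
/-!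
STATEMENT 17: for μη ∈ (1,2], x ∈ (0, 1/(μη)), the (r,s) system: if at time t
one has α_t > 0 (i.e. s_t > μη − 1), s_t > 0 and r_t < 0, then
(1 − xη r_t)(1 − xη r_{t+1}) ≥ 1 and consequently s_{t+2} ≥ s_t.
-/

theorem rs_system_s_increase
    (μ η x : ℝ) (hμ : 0 < μ) (hη : 0 < η)
    (hμη1 : 1 < μ * η) (hμη2 : μ * η ≤ 2)
    (hx0 : 0 < x) (hx1 : x < 1 / (μ * η))
    (r s : ℕ → ℝ)
    (hrrec : ∀ t, r (t + 1) =
      -(2 * μ * η - 1) * r t - (2 * η - μ * η ^ 2) * (r t) ^ 2 + η ^ 2 * (r t) ^ 3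
        + 2 * (r t) * (s t) - (1 + x) * η * (r t) ^ 2 * (s t))
    (hsrec : ∀ t, s (t + 1) =
      s t - 2 * x * η * (r t) * (s t) + x ^ 2 * η ^ 2 * (r t) ^ 2 * (s t)) :
    ∀ t, μ * η - 1 < s t → 0 < s t → r t < 0 →
      1 ≤ (1 - x * η * r t) * (1 - x * η * r (t + 1)) ∧ s t ≤ s (t + 2) := by
  intro t hs1 hs0 hr
  have hxm : x * (μ * η) < 1 := (lt_div_iff₀ (by positivity)).mp hx1
  set R := r t with hR
  set S := s t with hS
  set B : ℝ := -(2*μ*η-1) - (2*η - μ*η^2)*R + η^2*R^2 + 2*S - (1+x)*η*R*S with hB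
  have hr1 : r (t+1) = R * B := by rw [hrrec t, hB]; ring
  have hv : 0 < -(η * R) := by nlinarith
  have hu : 0 < -(x * η * R) := by nlinarith
  have huv : -(x * η * R) < -(η * R) := by nlinarith [mul_pos hμ hη]
  have hBlb : -1 + (-(η * R)) + (η * R)^2 < B := by
    nlinarith [mul_pos hv (show 0 < S - (μ*η - 1) by linarith),
      mul_pos hx0 (mul_pos hv hs0)]
  have hB1 : 0 < B + 1 := by nlinarith [sq_nonneg (η*R)]
  have hkey : 0 ≤ 1 + B * (1 - x*η*R) := by
    nlinarith [mul_pos hu hB1, sq_nonneg (η*R)]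
  have hgoal1 : 1 ≤ (1 - x * η * R) * (1 - x * η * r (t + 1)) := by
    have hid : (1 - x*η*R) * (1 - x*η*(R*B)) - 1 = (-(x*η*R)) * (1 + B*(1 - x*η*R)) := by
      ring
    rw [hr1]
    nlinarith [mul_nonneg hu.le hkey]
  refine ⟨hgoal1, ?_⟩
  set K : ℝ := (1 - x * η * R) * (1 - x * η * r (t + 1)) with hK
  have hs2 : s (t+2) = K^2 * S := by
    have h1 := hsrec t
    have h2 := hsrec (t+1)
    rw [h2, h1, hK]; ring
  have hK2 : 1 ≤ K^2 := by nlinarith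
  nlinarith [mul_le_mul_of_nonneg_right hK2 hs0.le]
end
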